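/- If U = U_s ⊗ U_e and V = V_s ⊗ V_e with U_s, V_s unitary on H_s and U_e, V_e unitary on H_e, then Δ̃_HS([U],[V]) = √(1 − (1/n_s)|Tr(U_s V_s†)|). In particular this distance is zero if and only if U_s = e^{iφ} V_s for some real φ. -/

import Mathlib

open Matrix Kronecker
open scoped ComplexOrder

/-- Hilbert–Schmidt (Frobenius) norm of a complex square matrix. -/
noncomputable def hsNorm {k : Type*} [Fintype k] (M : Matrix k k ℂ) : ℝ :=
  Real.sqrt (Matrix.trace (Mᴴ * M)).re

/-- Square root of a positive-semidefinite matrix, as `Matrix.PosSemidef.sqrt` was defined in older Mathlib. -/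
noncomputable def posSemidefSqrt {k : Type*} [Fintype k] [DecidableEq k] {A : Matrix k k ℂ}
    (hA : A.PosSemidef) : Matrix k k ℂ :=
  (hA.1.eigenvectorUnitary : Matrix k k ℂ) * diagonal ((↑) ∘ (√·) ∘ hA.1.eigenvalues) *
    (star hA.1.eigenvectorUnitary : Matrix k k ℂ)

/-- Trace norm: trace of the positive-semidefinite square root of `Mᴴ * M`. -/
noncomputable def traceNorm {k : Type*} [Fintype k] [DecidableEq k] (M : Matrix k k ℂ) : ℝ :=
  (Matrix.trace (posSemidefSqrt (Matrix.posSemidef_conjTranspose_mul_self M))).re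

/-- Induced two-norm: the largest singular value of `M`. -/
noncomputable def twoNorm {k : Type*} [Fintype k] [DecidableEq k] (M : Matrix k k ℂ) : ℝ :=
  ⨆ i, Real.sqrt
    ((Matrix.PosSemidef.isHermitian
      (Matrix.posSemidef_conjTranspose_mul_self M)).eigenvalues i)

/-- Partial trace over the environment factor `e`. -/
noncomputable def ptraceE {s e : Type*} [Fintype s] [Fintype e]
    (M : Matrix (s × e) (s × e) ℂ) : Matrix s s ℂ :=
  Matrix.of fun i j => ∑ ν : e, M (i, ν) (j, ν)

/-- Partial trace over the system factor `s`. -/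
noncomputable def ptraceS {s e : Type*} [Fintype s] [Fintype e]
    (M : Matrix (s × e) (s × e) ℂ) : Matrix e e ℂ :=
  Matrix.of fun μ ν => ∑ i : s, M (i, μ) (i, ν)

/-- A density matrix: positive semidefinite with unit trace. -/
def IsDensity {k : Type*} [Fintype k] (ρ : Matrix k k ℂ) : Prop :=
  ρ.PosSemidef ∧ Matrix.trace ρ = 1

/-!
For the Hilbert–Schmidt inner product `⟪A, B⟫ = Tr (B Aᴴ)` every unitary on an `n`-dimensional
space has norm `√n`, so `‖U - V‖² = 2 (n - Re Tr (U Vᴴ))`, and Cauchy–Schwarz gives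
`|Tr (U Vᴴ)| ≤ n`, with equality exactly when `U` is a phase multiple of `V`.
For product unitaries the trace factorises as `Tr (U_s V_sᴴ) · Tr (U_e Wᴴ)` with `W = Φ V_e`,
which runs over all unitaries as `Φ` does. The second factor has modulus at most `n_e`, and the
bound is attained at `W = e^{i arg c} U_e`, where `c = Tr (U_s V_sᴴ)`.
-/

lemma exp_mul_I_mem_unitary (θ : ℝ) : Complex.exp (θ * Complex.I) ∈ unitary ℂ := by
  rw [Unitary.mem_iff_star_mul_self, Complex.star_def, ← Complex.exp_conj, ← Complex.exp_add]
  simp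

section HilbertSchmidt

variable {k : Type*} [Fintype k]

lemma hsNorm_nonneg (A : Matrix k k ℂ) : 0 ≤ hsNorm A :=
  Real.sqrt_nonneg _

variable [DecidableEq k]

-- Mathlib's inner product induced by the positive definite matrix `1` is the Hilbert–Schmidt
-- one, `⟪A, B⟫ = Tr (B Aᴴ)`.
noncomputable local instance : NormedAddCommGroup (Matrix k k ℂ) :=
  Matrix.toMatrixNormedAddCommGroup 1 Matrix.PosDef.one

noncomputable local instance : InnerProductSpace ℂ (Matrix k k ℂ) :=
  Matrix.toMatrixInnerProductSpace 1 Matrix.PosDef.one.posSemidef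

lemma inner_eq_trace_mul_conjTranspose (A B : Matrix k k ℂ) :
    inner ℂ A B = trace (B * Aᴴ) := by
  simp [inner]

lemma hsNorm_eq_norm (A : Matrix k k ℂ) : hsNorm A = ‖A‖ := by
  rw [hsNorm, @norm_eq_sqrt_re_inner ℂ, inner_eq_trace_mul_conjTranspose, trace_mul_comm]
  rfl

variable {U V : Matrix k k ℂ}

lemma norm_sq_of_mem_unitaryGroup (hU : U ∈ unitaryGroup k ℂ) :
    ‖U‖ ^ 2 = Fintype.card k := by
  rw [@norm_sq_eq_re_inner ℂ, inner_eq_trace_mul_conjTranspose, ← star_eq_conjTranspose,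
    mem_unitaryGroup_iff.mp hU, trace_one]
  simp

lemma norm_of_mem_unitaryGroup (hU : U ∈ unitaryGroup k ℂ) :
    ‖U‖ = √(Fintype.card k) := by
  rw [← norm_sq_of_mem_unitaryGroup hU, Real.sqrt_sq (norm_nonneg U)]

lemma hsNorm_sub_sq_of_mem_unitaryGroup (hU : U ∈ unitaryGroup k ℂ)
    (hV : V ∈ unitaryGroup k ℂ) :
    hsNorm (U - V) ^ 2 = 2 * (Fintype.card k - (trace (U * Vᴴ)).re) := by
  rw [hsNorm_eq_norm, norm_sub_rev, @norm_sub_sq ℂ, inner_eq_trace_mul_conjTranspose,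
    norm_sq_of_mem_unitaryGroup hU, norm_sq_of_mem_unitaryGroup hV]
  simp only [RCLike.re_to_complex]
  ring

lemma norm_trace_mul_conjTranspose_le (hU : U ∈ unitaryGroup k ℂ)
    (hV : V ∈ unitaryGroup k ℂ) :
    ‖trace (U * Vᴴ)‖ ≤ Fintype.card k := by
  have h := norm_inner_le_norm (𝕜 := ℂ) V U
  rwa [inner_eq_trace_mul_conjTranspose, norm_of_mem_unitaryGroup hU,
    norm_of_mem_unitaryGroup hV, Real.mul_self_sqrt (Nat.cast_nonneg _)] at h

lemma trace_smul_mul_conjTranspose (z : ℂ) (hV : V ∈ unitaryGroup k ℂ) :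
    trace ((z • V) * Vᴴ) = z * Fintype.card k := by
  rw [smul_mul_assoc, ← star_eq_conjTranspose, mem_unitaryGroup_iff.mp hV, trace_smul,
    trace_one, smul_eq_mul]

lemma norm_trace_mul_conjTranspose_eq_card_iff [Nonempty k] (hU : U ∈ unitaryGroup k ℂ)
    (hV : V ∈ unitaryGroup k ℂ) :
    ‖trace (U * Vᴴ)‖ = Fintype.card k ↔ ∃ φ : ℝ, U = Complex.exp (φ * Complex.I) • V := by
  have hcard : 0 < √(Fintype.card k : ℝ) := by simp [Fintype.card_pos]
  have hne : ∀ {W : Matrix k k ℂ}, W ∈ unitaryGroup k ℂ → W ≠ 0 := fun hW h0 =>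
    hcard.ne (by rw [← norm_of_mem_unitaryGroup hW, h0, norm_zero])
  constructor
  · intro h
    have hCS : ‖inner ℂ V U‖ = ‖V‖ * ‖U‖ := by
      rw [inner_eq_trace_mul_conjTranspose, h, norm_of_mem_unitaryGroup hU,
        norm_of_mem_unitaryGroup hV, Real.mul_self_sqrt (Nat.cast_nonneg _)]
    obtain ⟨r, -, rfl⟩ := (norm_inner_eq_norm_iff (hne hV) (hne hU)).mp hCS
    have hr : ‖r‖ = 1 := by
      simpa [norm_smul, norm_of_mem_unitaryGroup hV, hcard.ne'] using norm_of_mem_unitaryGroup hU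
    refine ⟨r.arg, congrArg (· • V) ?_⟩
    nth_rw 1 [← Complex.norm_mul_exp_arg_mul_I r]
    rw [hr, Complex.ofReal_one, one_mul]
  · rintro ⟨φ, rfl⟩
    rw [trace_smul_mul_conjTranspose _ hV, norm_mul, Complex.norm_exp_ofReal_mul_I, one_mul,
      Complex.norm_natCast]

lemma exists_mem_unitaryGroup_re_mul_trace_eq (c : ℂ) {U : Matrix k k ℂ}
    (hU : U ∈ unitaryGroup k ℂ) :
    ∃ W ∈ unitaryGroup k ℂ, (c * trace (U * Wᴴ)).re = ‖c‖ * Fintype.card k := by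
  set z := Complex.exp (c.arg * Complex.I)
  have hz : z ∈ unitary ℂ := exp_mul_I_mem_unitary c.arg
  refine ⟨z • U, Unitary.smul_mem_of_mem hz hU, ?_⟩
  rw [conjTranspose_smul, mul_smul_comm, ← star_eq_conjTranspose, mem_unitaryGroup_iff.mp hU,
    trace_smul, trace_one, smul_eq_mul, ← Complex.norm_mul_exp_arg_mul_I c, mul_assoc,
    ← mul_assoc z, Unitary.mul_star_self_of_mem hz, one_mul]
  simp

end HilbertSchmidt

section Kronecker

variable {s e : Type*} [Fintype s] [Fintype e]

lemma trace_kronecker_mul_conjTranspose (A C : Matrix s s ℂ) (B D : Matrix e e ℂ) :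
    trace ((A ⊗ₖ B) * (C ⊗ₖ D)ᴴ) = trace (A * Cᴴ) * trace (B * Dᴴ) := by
  rw [conjTranspose_kronecker, ← mul_kronecker_mul, trace_kronecker]

variable [DecidableEq s] [DecidableEq e] {Us Vs : Matrix s s ℂ} {Ue W : Matrix e e ℂ}

lemma hsNorm_kronecker_sub_sq (hUs : Us ∈ unitaryGroup s ℂ) (hVs : Vs ∈ unitaryGroup s ℂ)
    (hUe : Ue ∈ unitaryGroup e ℂ) (hW : W ∈ unitaryGroup e ℂ) :
    hsNorm (Us ⊗ₖ Ue - Vs ⊗ₖ W) ^ 2 =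
      2 * (Fintype.card s * Fintype.card e - (trace (Us * Vsᴴ) * trace (Ue * Wᴴ)).re) := by
  rw [hsNorm_sub_sq_of_mem_unitaryGroup (kronecker_mem_unitary hUs hUe)
    (kronecker_mem_unitary hVs hW), trace_kronecker_mul_conjTranspose, Fintype.card_prod,
    Nat.cast_mul]

lemma hsNorm_kronecker_sub_div [Nonempty s] [Nonempty e] (hUs : Us ∈ unitaryGroup s ℂ)
    (hVs : Vs ∈ unitaryGroup s ℂ) (hUe : Ue ∈ unitaryGroup e ℂ) (hW : W ∈ unitaryGroup e ℂ) :
    hsNorm (Us ⊗ₖ Ue - Vs ⊗ₖ W) / √(2 * Fintype.card (s × e)) =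
      √(1 - (trace (Us * Vsᴴ) * trace (Ue * Wᴴ)).re / (Fintype.card s * Fintype.card e)) := by
  have hN : (0 : ℝ) < Fintype.card s * Fintype.card e := by positivity
  rw [← Real.sqrt_sq (hsNorm_nonneg _), hsNorm_kronecker_sub_sq hUs hVs hUe hW,
    ← Real.sqrt_div' _ (by positivity), Fintype.card_prod, Nat.cast_mul]
  congr 1
  field_simp

end Kronecker

/-- for tensor-product unitaries `U = U_s ⊗ U_e`, `V = V_s ⊗ V_e`,
`Δ̃_HS([U],[V]) = √(1 − |Tr(U_s V_s†)|/n_s)`, which vanishes iff `U_s = e^{iφ} V_s`. -/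
theorem stmt9 {s e : Type*} [Fintype s] [Fintype e] [DecidableEq s] [DecidableEq e]
    [Nonempty s] [Nonempty e]
    (Us Vs : Matrix s s ℂ) (Ue Ve : Matrix e e ℂ)
    (hUs : Us ∈ Matrix.unitaryGroup s ℂ) (hVs : Vs ∈ Matrix.unitaryGroup s ℂ)
    (hUe : Ue ∈ Matrix.unitaryGroup e ℂ) (hVe : Ve ∈ Matrix.unitaryGroup e ℂ) :
    IsLeast {x : ℝ | ∃ Φ ∈ Matrix.unitaryGroup e ℂ,
        x = hsNorm ((Us ⊗ₖ Ue) - ((1 : Matrix s s ℂ) ⊗ₖ Φ) * (Vs ⊗ₖ Ve)) /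
          Real.sqrt (2 * (Fintype.card (s × e)))}
      (Real.sqrt (1 - ‖Matrix.trace (Us * Vsᴴ)‖ / (Fintype.card s))) ∧
    (Real.sqrt (1 - ‖Matrix.trace (Us * Vsᴴ)‖ / (Fintype.card s)) = 0 ↔
      ∃ φ : ℝ, Us = Complex.exp (φ * Complex.I) • Vs) := by
  set c := trace (Us * Vsᴴ)
  have hns : (0 : ℝ) < Fintype.card s := by positivity
  have hne : (0 : ℝ) < Fintype.card e := by positivity
  have hvalue : ∀ Φ ∈ unitaryGroup e ℂ,
      hsNorm (Us ⊗ₖ Ue - (1 ⊗ₖ Φ) * (Vs ⊗ₖ Ve)) / √(2 * Fintype.card (s × e)) =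
        √(1 - (c * trace (Ue * (Φ * Ve)ᴴ)).re / (Fintype.card s * Fintype.card e)) :=
    fun Φ hΦ => by
      rw [← mul_kronecker_mul, Matrix.one_mul]
      exact hsNorm_kronecker_sub_div hUs hVs hUe (mul_mem hΦ hVe)
  refine ⟨⟨?_, ?_⟩, ?_⟩
  · obtain ⟨W, hW, hcW⟩ := exists_mem_unitaryGroup_re_mul_trace_eq c hUe
    have hΦ : W * Veᴴ ∈ unitaryGroup e ℂ := mul_mem hW (Unitary.star_mem hVe)
    refine ⟨W * Veᴴ, hΦ, ?_⟩
    have hVe_inv : Veᴴ * Ve = 1 := mem_unitaryGroup_iff'.mp hVe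
    rw [hvalue _ hΦ, Matrix.mul_assoc, hVe_inv, Matrix.mul_one, hcW, mul_div_mul_right _ _ hne.ne']
  · rintro _ ⟨Φ, hΦ, rfl⟩
    have ht := norm_trace_mul_conjTranspose_le hUe (mul_mem hΦ hVe)
    rw [hvalue Φ hΦ, ← mul_div_mul_right ‖c‖ _ hne.ne']
    gcongr
    calc (c * trace (Ue * (Φ * Ve)ᴴ)).re ≤ ‖c‖ * ‖trace (Ue * (Φ * Ve)ᴴ)‖ :=
          (Complex.re_le_norm _).trans (norm_mul _ _).le
      _ ≤ ‖c‖ * Fintype.card e := by gcongr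
  · rw [Real.sqrt_eq_zero', sub_nonpos, one_le_div hns,
      ← norm_trace_mul_conjTranspose_eq_card_iff hUs hVs]
    exact ⟨(norm_trace_mul_conjTranspose_le hUs hVs).antisymm, ge_of_eq⟩
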